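/- If lim_{j→∞} γ_j² > 0, then average-case L₂-approximation with Gaussian kernels suffers from the curse of dimensionality: there exist positive numbers C, ε₀, a such that n(ε,d) ≥ C(1+a)^d for all 0 < ε ≤ ε₀ and infinitely many d ∈ ℕ. -/

import Mathlib

open Filter

/-- `omegaOf x` is `ω` for shape parameter squared `x = γ²`:
`ω = 2γ²/(1+2γ²+√(1+4γ²))`. -/
noncomputable def omegaOf (x : ℝ) : ℝ := 2 * x / (1 + 2 * x + Real.sqrt (1 + 4 * x))

/-- Eigenvalues `λ_d(j) = ∏_{k=1}^d (1-ω_k) ω_k^{j_k}`, where `g k = γ_{k+1}²`. -/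
noncomputable def eigen (g : ℕ → ℝ) (d : ℕ) (j : Fin d → ℕ) : ℝ :=
  ∏ k : Fin d, (1 - omegaOf (g (k : ℕ))) * omegaOf (g (k : ℕ)) ^ (j k)

/-- The information complexity `n(ε,d)`: the least `n` such that some finite set `S` of
multi-indices with `|S| ≤ n` satisfies `∑_{j ∉ S} λ_d(j) ≤ ε²`. -/
noncomputable def infoComp (g : ℕ → ℝ) (ε : ℝ) (d : ℕ) : ℕ :=
  sInf {n : ℕ | ∃ S : Finset (Fin d → ℕ), S.card ≤ n ∧
    (∑' j : {j : Fin d → ℕ // j ∉ S}, eigen g d j.1) ≤ ε ^ 2}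

/-!
Every eigenvalue is a product of factors `(1 - ω_k) ω_k^{j_k} ≤ 1 - ω_k ≤ 1 - ω(L)`, since `ω` is
increasing and `γ_k² ≥ L`; so each eigenvalue is at most `(1 - ω(L))^d`, while they sum to `1`.
A set `S` leaving a tail of at most `ε² ≤ 1/4` must therefore carry mass `≥ 3/4`, which forces
`|S| ≥ (3/4) (1 - ω(L))^{-d}`: exponential growth with base `1 + a = 1 / (1 - ω(L)) > 1`.
-/

lemma omegaOf_eq_one_sub {x : ℝ} (hx : 0 ≤ x) :
    omegaOf x = 1 - 2 / (Real.sqrt (1 + 4 * x) + 1) := by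
  have hs2 : Real.sqrt (1 + 4 * x) ^ 2 = 1 + 4 * x := Real.sq_sqrt (by linarith)
  unfold omegaOf
  rw [eq_sub_iff_add_eq, div_add_div _ _ (by positivity) (by positivity),
    div_eq_one_iff_eq (by positivity)]
  nlinarith

lemma omegaOf_nonneg {x : ℝ} (hx : 0 ≤ x) : 0 ≤ omegaOf x := by
  unfold omegaOf
  positivity

lemma omegaOf_pos {x : ℝ} (hx : 0 < x) : 0 < omegaOf x := by
  unfold omegaOf
  positivity

lemma omegaOf_lt_one {x : ℝ} (hx : 0 ≤ x) : omegaOf x < 1 := by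
  rw [omegaOf_eq_one_sub hx, sub_lt_self_iff]
  positivity

lemma omegaOf_monotoneOn : MonotoneOn omegaOf (Set.Ici 0) := by
  intro x hx y hy hxy
  rw [omegaOf_eq_one_sub hx, omegaOf_eq_one_sub hy, sub_le_sub_iff_left]
  gcongr

lemma one_sub_omegaOf_mul_pow_nonneg {x : ℝ} (hx : 0 ≤ x) (n : ℕ) :
    0 ≤ (1 - omegaOf x) * omegaOf x ^ n :=
  mul_nonneg (sub_nonneg.2 (omegaOf_lt_one hx).le) (pow_nonneg (omegaOf_nonneg hx) n)

lemma one_sub_omegaOf_mul_pow_le {x y : ℝ} (hx : 0 ≤ x) (hxy : x ≤ y) (n : ℕ) :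
    (1 - omegaOf y) * omegaOf y ^ n ≤ 1 - omegaOf x := by
  have hy : 0 ≤ y := hx.trans hxy
  calc (1 - omegaOf y) * omegaOf y ^ n ≤ 1 - omegaOf y :=
        mul_le_of_le_one_right (sub_nonneg.2 (omegaOf_lt_one hy).le)
          (pow_le_one₀ (omegaOf_nonneg hy) (omegaOf_lt_one hy).le)
    _ ≤ 1 - omegaOf x := sub_le_sub_left (omegaOf_monotoneOn hx hy hxy) 1

theorem hasSum_fin_prod_of_nonneg {β : Type*} {d : ℕ} {f : Fin d → β → ℝ} {s : Fin d → ℝ}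
    (hf0 : ∀ k b, 0 ≤ f k b) (hf : ∀ k, HasSum (f k) (s k)) :
    HasSum (fun j : Fin d → β => ∏ k, f k (j k)) (∏ k, s k) := by
  induction d with
  | zero => simp
  | succ d ih =>
    have htail :
        HasSum (fun j : Fin d → β => ∏ k : Fin d, f k.succ (j k)) (∏ k : Fin d, s k.succ) :=
      ih (fun k => hf0 k.succ) (fun k => hf k.succ)
    have htail0 : ∀ j : Fin d → β, 0 ≤ ∏ k : Fin d, f k.succ (j k) :=
      fun j => Finset.prod_nonneg fun k _ => hf0 k.succ (j k)
    have hsummable := (hf 0).summable.mul_of_nonneg htail.summable (hf0 0) htail0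
    have hprod := (hf 0).mul htail hsummable
    have hcons : (fun j : Fin (d + 1) → β => ∏ k, f k (j k)) ∘ Fin.consEquiv (fun _ => β) =
        fun p => f 0 p.1 * ∏ k : Fin d, f k.succ (p.2 k) := by
      ext ⟨b, j⟩
      simp [Fin.prod_univ_succ]
    rw [Fin.prod_univ_succ]
    refine (Fin.consEquiv fun _ => β).hasSum_iff.mp ?_
    rw [hcons]
    exact hprod

lemma hasSum_eigen {g : ℕ → ℝ} (hg : ∀ k, 0 ≤ g k) (d : ℕ) : HasSum (eigen g d) 1 := by
  have hgeom : ∀ k : Fin d,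
      HasSum (fun n => (1 - omegaOf (g k)) * omegaOf (g k) ^ n) 1 := fun k => by
    have h1 := omegaOf_lt_one (hg k)
    simpa [mul_inv_cancel₀ (sub_ne_zero.2 h1.ne')] using
      (hasSum_geometric_of_lt_one (omegaOf_nonneg (hg k)) h1).mul_left (1 - omegaOf (g k))
  have hprod := hasSum_fin_prod_of_nonneg
    (fun k => one_sub_omegaOf_mul_pow_nonneg (hg k)) hgeom
  rwa [Finset.prod_const_one] at hprod

lemma eigen_le_one_sub_omegaOf_pow {g : ℕ → ℝ} {L : ℝ} (hL : 0 ≤ L) (hgL : ∀ k, L ≤ g k)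
    (d : ℕ) (j : Fin d → ℕ) : eigen g d j ≤ (1 - omegaOf L) ^ d := by
  rw [eigen, ← Fin.prod_const]
  exact Finset.prod_le_prod (fun k _ => one_sub_omegaOf_mul_pow_nonneg (hL.trans (hgL k)) _)
    fun k _ => one_sub_omegaOf_mul_pow_le hL (hgL k) _

lemma one_sub_le_card_mul_of_tsum_compl_le {α : Type*} {f : α → ℝ} (hf : HasSum f 1) {M δ : ℝ}
    (hM : ∀ a, f a ≤ M) {S : Finset α} (hS : ∑' a : {a // a ∉ S}, f a ≤ δ) :
    1 - δ ≤ S.card * M := by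
  have hsplit : ∑ a ∈ S, f a + ∑' a : {a // a ∉ S}, f a = 1 :=
    hf.tsum_eq ▸ hf.summable.sum_add_tsum_compl
  have hhead : ∑ a ∈ S, f a ≤ S.card * M := by
    simpa using Finset.sum_le_card_nsmul S f M fun a _ => hM a
  linarith

lemma one_sub_sq_le_infoComp_mul {g : ℕ → ℝ} (hg : ∀ k, 0 ≤ g k) {ε M : ℝ} (hε : 0 < ε)
    (hM0 : 0 ≤ M) {d : ℕ} (hM : ∀ j, eigen g d j ≤ M) :
    1 - ε ^ 2 ≤ infoComp g ε d * M := by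
  have hne : {n : ℕ | ∃ S : Finset (Fin d → ℕ), S.card ≤ n ∧
      ∑' j : {j : Fin d → ℕ // j ∉ S}, eigen g d j.1 ≤ ε ^ 2}.Nonempty := by
    obtain ⟨S, hS⟩ := ((tendsto_order.1 (tendsto_tsum_compl_atTop_zero (eigen g d))).2
      (ε ^ 2) (by positivity)).exists
    exact ⟨S.card, S, le_rfl, hS.le⟩
  obtain ⟨S, hcard, htail⟩ := Nat.sInf_mem hne
  calc 1 - ε ^ 2 ≤ S.card * M := one_sub_le_card_mul_of_tsum_compl_le (hasSum_eigen hg d) hM htail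
    _ ≤ infoComp g ε d * M := by gcongr; exact hcard

theorem stmt5_general (g : ℕ → ℝ) (hanti : Antitone g)
    (L : ℝ) (hL : Filter.Tendsto g Filter.atTop (nhds L)) (hLpos : 0 < L) :
    ∃ C ε₀ a : ℝ, 0 < C ∧ 0 < ε₀ ∧ 0 < a ∧
      ∀ ε : ℝ, 0 < ε → ε ≤ ε₀ →
        {d : ℕ | 1 ≤ d ∧ C * (1 + a) ^ d ≤ (infoComp g ε d : ℝ)}.Infinite := by
  have hgL : ∀ k, L ≤ g k := fun k => hanti.le_of_tendsto hL k
  have hω : 0 < omegaOf L := omegaOf_pos hLpos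
  have hω' : 0 < 1 - omegaOf L := sub_pos.2 (omegaOf_lt_one hLpos.le)
  refine ⟨3 / 4, 1 / 2, omegaOf L / (1 - omegaOf L), by norm_num, by norm_num, by positivity,
    fun ε hε hε₀ => (Set.Ici_infinite 1).mono fun d hd => ⟨hd, ?_⟩⟩
  have hbound := one_sub_sq_le_infoComp_mul (fun k => hLpos.le.trans (hgL k)) hε
    (pow_nonneg hω'.le d) (eigen_le_one_sub_omegaOf_pow hLpos.le hgL d)
  have hbase : 1 + omegaOf L / (1 - omegaOf L) = (1 - omegaOf L)⁻¹ := by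
    field_simp
    ring
  rw [hbase, inv_pow, ← div_eq_mul_inv, div_le_iff₀ (pow_pos hω' d)]
  nlinarith

/-- If `lim_j γ_j² > 0` then the problem suffers from the curse of dimensionality. -/
theorem stmt5 (g : ℕ → ℝ) (hpos : ∀ j, 0 < g j) (hanti : Antitone g)
    (L : ℝ) (hL : Filter.Tendsto g Filter.atTop (nhds L)) (hLpos : 0 < L) :
    ∃ C ε₀ a : ℝ, 0 < C ∧ 0 < ε₀ ∧ 0 < a ∧
      ∀ ε : ℝ, 0 < ε → ε ≤ ε₀ →
        {d : ℕ | 1 ≤ d ∧ C * (1 + a) ^ d ≤ (infoComp g ε d : ℝ)}.Infinite :=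
  stmt5_general g hanti L hL hLpos
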